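/- Let Θ be a compact metric space, M : Θ → ℝ continuous with unique well-separated maximizer θ₀, and let Mₙ : Θ → ℝ be random functions with sup_{θ∈Θ} |Mₙ(θ) - M(θ)| → 0 in probability. If θ̂ₙ maximizes Mₙ, then θ̂ₙ → θ₀ in probability. -/

import Mathlib

/-!
On the event `sup_θ |Mₙ θ - M θ| < δ / 2` the maximizer `θ̂ₙ` of `Mₙ` satisfies
`M θ₀ - δ < M θ̂ₙ`, so by well-separation `dist θ̂ₙ θ₀ < ε`. Hence
`{ε ≤ dist θ̂ₙ θ₀}` is contained in the event `{∃ θ, δ / 2 ≤ |Mₙ θ - M θ|}`,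
whose probability tends to `0`.
-/

open MeasureTheory Filter

theorem sub_lt_of_maximizer_of_abs_sub_lt_half {Θ : Type*} {M N : Θ → ℝ} {θ₀ θmax : Θ} {δ : ℝ}
    (hmax : ∀ θ, N θ ≤ N θmax) (hclose : ∀ θ, |N θ - M θ| < δ / 2) :
    M θ₀ - δ < M θmax := by
  have hθmax := abs_lt.mp (hclose θmax)
  have hθ₀ := abs_lt.mp (hclose θ₀)
  linarith [hmax θ₀]

theorem stmt_15_general {Θ : Type*} [MetricSpace Θ]
    {Ω : Type*} {mΩ : MeasurableSpace Ω} (P : Measure Ω)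
    (M : Θ → ℝ) (θ0 : Θ)
    (hsep : ∀ ε > 0, ∃ δ > 0, ∀ θ, ε ≤ dist θ θ0 → M θ ≤ M θ0 - δ)
    (Mn : ℕ → Ω → Θ → ℝ) (θhat : ℕ → Ω → Θ)
    (hargmax : ∀ n ω θ, Mn n ω θ ≤ Mn n ω (θhat n ω))
    (hunif : ∀ ε > 0,
      Tendsto (fun n => P {ω | ∃ θ, ε ≤ |Mn n ω θ - M θ|}) atTop (nhds 0)) :
    ∀ ε > 0, Tendsto (fun n => P {ω | ε ≤ dist (θhat n ω) θ0}) atTop (nhds 0) := by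
  intro ε hε
  obtain ⟨δ, hδ, hδsep⟩ := hsep ε hε
  have hsub : ∀ n, {ω | ε ≤ dist (θhat n ω) θ0} ⊆ {ω | ∃ θ, δ / 2 ≤ |Mn n ω θ - M θ|} := by
    intro n ω hfar
    by_contra hnear
    simp only [Set.mem_ofPred_eq, not_exists, not_le] at hnear
    linarith [hδsep _ hfar, sub_lt_of_maximizer_of_abs_sub_lt_half (θ₀ := θ0) (hargmax n ω) hnear]
  exact tendsto_of_tendsto_of_tendsto_of_le_of_le tendsto_const_nhds (hunif (δ / 2) (by positivity))
    (fun _ => zero_le) (fun n => measure_mono (hsub n))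

/-- argmax consistency, cf. van der Vaart & Wellner Cor. 3.2.3: Θ compact
metric, M continuous with unique well-separated maximizer θ₀, Mₙ random criteria
converging uniformly to M in probability, and θ̂ₙ maximizing Mₙ; then θ̂ₙ → θ₀ in
probability. -/
theorem stmt_15 {Θ : Type*} [MetricSpace Θ] [CompactSpace Θ] [Nonempty Θ]
    {Ω : Type*} {mΩ : MeasurableSpace Ω} (P : Measure Ω) [IsProbabilityMeasure P]
    (M : Θ → ℝ) (hM : Continuous M) (θ0 : Θ)
    (hmax : ∀ θ, M θ ≤ M θ0)
    (hsep : ∀ ε > 0, ∃ δ > 0, ∀ θ, ε ≤ dist θ θ0 → M θ ≤ M θ0 - δ)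
    (Mn : ℕ → Ω → Θ → ℝ) (θhat : ℕ → Ω → Θ)
    (hargmax : ∀ n ω θ, Mn n ω θ ≤ Mn n ω (θhat n ω))
    (hunif : ∀ ε > 0,
      Tendsto (fun n => P {ω | ∃ θ, ε ≤ |Mn n ω θ - M θ|}) atTop (nhds 0)) :
    ∀ ε > 0, Tendsto (fun n => P {ω | ε ≤ dist (θhat n ω) θ0}) atTop (nhds 0) :=
  stmt_15_general (mΩ := mΩ) P M θ0 hsep Mn θhat hargmax hunif
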